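/- arXiv:1609.01197 — 3 statements merged into one kernel-verified Lean document; each statement's English description precedes it below -/
import Mathlib

section
/- (Sum formula for qMZVs in weight k+1, depth 2) For 0 < q < 1 and an integer k ≥ 2, Σ_{j=0}^{k-2} ζ_q(k-j, j+1) = ζ_q(k+1). -/
open scoped BigOperators

/-- The q-integer [m] = (1-q^m)/(1-q). -/
noncomputable def qint (q : ℝ) (m : ℕ) : ℝ := (1 - q ^ m) / (1 - q)

/-- Depth-one q-zeta value ζ_q(k) = Σ_{m≥1} q^{(k-1)m}/[m]^k. -/
noncomputable def zetaQ (q : ℝ) (k : ℕ) : ℝ :=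
  ∑' m : ℕ, q ^ ((k - 1) * (m + 1)) / (qint q (m + 1)) ^ k

/-- Depth-two qMZV: sum over m₁ > m₂ ≥ 1, parametrized by m₂ = p.2+1, m₁ = p.2+p.1+2. -/
noncomputable def zetaQ2 (q : ℝ) (k₁ k₂ : ℕ) : ℝ :=
  ∑' p : ℕ × ℕ,
    q ^ ((k₁ - 1) * (p.2 + p.1 + 2) + (k₂ - 1) * (p.2 + 1)) /
      ((qint q (p.2 + p.1 + 2)) ^ k₁ * (qint q (p.2 + 1)) ^ k₂)

/-- Depth-two qMZSV: sum over m₁ ≥ m₂ ≥ 1, parametrized by m₂ = p.2+1, m₁ = p.2+p.1+1. -/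
noncomputable def zetaQStar2 (q : ℝ) (k₁ k₂ : ℕ) : ℝ :=
  ∑' p : ℕ × ℕ,
    q ^ ((k₁ - 1) * (p.2 + p.1 + 1) + (k₂ - 1) * (p.2 + 1)) /
      ((qint q (p.2 + p.1 + 1)) ^ k₁ * (qint q (p.2 + 1)) ^ k₂)

/-- Interpolated q-double zeta value. -/
noncomputable def zetaQT (q t : ℝ) (k₁ k₂ : ℕ) : ℝ :=
  zetaQ2 q k₁ k₂ + t * (zetaQ q (k₁ + k₂) + (1 - q) * zetaQ q (k₁ + k₂ - 1))

/-!
Write `A m = q^m/[m]` (`qPowDivQint`) and `W_k m = q^((k-1)m)/[m]^k` (`zetaQTerm`, the summand of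
`ζ_q(k)`), so that `W_(k+1) m = W_k m * A m`. For `m, n ≥ 1` the terms of `Σ_j ζ_q(k-j, j+1)` at
`(m₁, m₂) = (m + n, m)` add up to `W_k m * (A n - A (m+n)) - W_k (m+n) * A n`; by induction on `k`
this reduces to `(A m - A (m+n)) * (A n - A (m+n)) = W_2 (m+n)`. Summed over `n`, the first part
telescopes to `W_k m * S m` with `S m = A 1 + ⋯ + A m` (`qHarmonic`); summed along `m + n = M`,
the second part is `W_k M * S (M-1)`. The difference is `Σ_M W_k M * A M = ζ_q(k+1)`.
-/

open Finset

theorem HasSum.sub_nat_add {G : Type*} [AddCommGroup G] [TopologicalSpace G]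
    [IsTopologicalAddGroup G] {f : ℕ → G} {a : G} (hf : HasSum f a) (m : ℕ) :
    HasSum (fun n ↦ f n - f (n + m)) (∑ i ∈ range m, f i) := by
  simpa using hf.sub ((hasSum_nat_add_iff' m).mpr hf)

theorem HasSum.sum_antidiagonal {α A : Type*} [AddCommMonoid α] [TopologicalSpace α]
    [ContinuousAdd α] [RegularSpace α] [AddMonoid A] [HasAntidiagonal A]
    {f : A × A → α} {a : α} (hf : HasSum f a) :
    HasSum (fun n ↦ ∑ x ∈ antidiagonal n, f x) a :=
  (HasAntidiagonal.sigmaAntidiagonalEquivProd.hasSum_iff.mpr hf).sigma fun n ↦ by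
    rw [← sum_coe_sort]; exact hasSum_fintype _

noncomputable def qPowDivQint (q : ℝ) (m : ℕ) : ℝ := q ^ m / qint q m

noncomputable def zetaQTerm (q : ℝ) (k m : ℕ) : ℝ := q ^ ((k - 1) * m) / qint q m ^ k

noncomputable def qHarmonic (q : ℝ) (m : ℕ) : ℝ := ∑ i ∈ range m, qPowDivQint q (i + 1)

theorem zetaQ_eq_tsum (q : ℝ) (k : ℕ) : zetaQ q k = ∑' m, zetaQTerm q k (m + 1) := rfl

theorem zetaQ2_eq_tsum (q : ℝ) (k₁ k₂ : ℕ) :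
    zetaQ2 q k₁ k₂ = ∑' p : ℕ × ℕ, zetaQTerm q k₁ (p.2 + p.1 + 2) * zetaQTerm q k₂ (p.2 + 1) := by
  simp only [zetaQ2, zetaQTerm, pow_add, mul_div_mul_comm]

section

variable {q : ℝ}

theorem qint_add (hq : q ≠ 1) (a b : ℕ) : qint q (a + b) = qint q a + q ^ a * qint q b := by
  have : 1 - q ≠ 0 := sub_ne_zero.mpr hq.symm
  unfold qint
  field_simp
  ring

theorem one_le_qint (hq0 : 0 ≤ q) (hq1 : q < 1) {m : ℕ} (hm : m ≠ 0) : 1 ≤ qint q m := by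
  rw [qint, one_le_div (by linarith)]
  linarith [pow_le_of_le_one hq0 hq1.le hm]

theorem qint_pos (hq0 : 0 ≤ q) (hq1 : q < 1) {m : ℕ} (hm : m ≠ 0) : 0 < qint q m :=
  one_pos.trans_le (one_le_qint hq0 hq1 hm)

theorem qPowDivQint_nonneg (hq0 : 0 ≤ q) (hq1 : q < 1) {m : ℕ} (hm : m ≠ 0) :
    0 ≤ qPowDivQint q m :=
  div_nonneg (pow_nonneg hq0 m) (qint_pos hq0 hq1 hm).le

theorem qPowDivQint_le_pow (hq0 : 0 ≤ q) (hq1 : q < 1) {m : ℕ} (hm : m ≠ 0) :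
    qPowDivQint q m ≤ q ^ m :=
  div_le_self (pow_nonneg hq0 m) (one_le_qint hq0 hq1 hm)

theorem qPowDivQint_le_one (hq0 : 0 ≤ q) (hq1 : q < 1) {m : ℕ} (hm : m ≠ 0) :
    qPowDivQint q m ≤ 1 :=
  (qPowDivQint_le_pow hq0 hq1 hm).trans (pow_le_one₀ hq0 hq1.le)

theorem zetaQTerm_nonneg (hq0 : 0 ≤ q) (hq1 : q < 1) (k : ℕ) {m : ℕ} (hm : m ≠ 0) :
    0 ≤ zetaQTerm q k m :=
  div_nonneg (pow_nonneg hq0 _) (pow_nonneg (qint_pos hq0 hq1 hm).le k)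

theorem zetaQTerm_le_pow (hq0 : 0 ≤ q) (hq1 : q < 1) (k : ℕ) {m : ℕ} (hm : m ≠ 0) :
    zetaQTerm q k m ≤ q ^ ((k - 1) * m) :=
  div_le_self (pow_nonneg hq0 _) (one_le_pow₀ (one_le_qint hq0 hq1 hm))

theorem zetaQTerm_le_one (hq0 : 0 ≤ q) (hq1 : q < 1) (k : ℕ) {m : ℕ} (hm : m ≠ 0) :
    zetaQTerm q k m ≤ 1 :=
  (zetaQTerm_le_pow hq0 hq1 k hm).trans (pow_le_one₀ hq0 hq1.le)

theorem zetaQTerm_succ {k : ℕ} (hk : k ≠ 0) (m : ℕ) :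
    zetaQTerm q (k + 1) m = zetaQTerm q k m * qPowDivQint q m := by
  obtain ⟨k, rfl⟩ := Nat.exists_eq_add_one_of_ne_zero hk
  rw [zetaQTerm, zetaQTerm, qPowDivQint, div_mul_div_comm, ← pow_succ, ← pow_add]
  congr 2
  simp only [Nat.add_sub_cancel]
  ring

theorem zetaQTerm_one_mul_qPowDivQint_sub (hq0 : 0 ≤ q) (hq1 : q < 1) {m n : ℕ} (hm : m ≠ 0)
    (hn : n ≠ 0) :
    zetaQTerm q 1 m * (qPowDivQint q n - qPowDivQint q (m + n)) =
      zetaQTerm q 1 (m + n) * qPowDivQint q n := by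
  have hX := qint_add hq1.ne m n
  have := (qint_pos hq0 hq1 hm).ne'
  have := (qint_pos hq0 hq1 hn).ne'
  have := (qint_pos hq0 hq1 (m := m + n) (by omega)).ne'
  simp only [zetaQTerm, qPowDivQint, Nat.sub_self, zero_mul, pow_zero, pow_one]
  field_simp
  rw [pow_add]
  linear_combination q ^ n * hX

theorem qPowDivQint_sub_mul_sub (hq0 : 0 ≤ q) (hq1 : q < 1) {m n : ℕ} (hm : m ≠ 0)
    (hn : n ≠ 0) :
    (qPowDivQint q m - qPowDivQint q (m + n)) * (qPowDivQint q n - qPowDivQint q (m + n)) =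
      zetaQTerm q 2 (m + n) := by
  have hX := qint_add hq1.ne m n
  have hsymm : qint q m + q ^ m * qint q n = qint q n + q ^ n * qint q m := by
    rw [← hX, ← qint_add hq1.ne, add_comm]
  have := (qint_pos hq0 hq1 hm).ne'
  have := (qint_pos hq0 hq1 hn).ne'
  have hX0 := (qint_pos hq0 hq1 (m := m + n) (by omega)).ne'
  simp only [zetaQTerm, qPowDivQint]
  rw [hX] at hX0 ⊢
  field_simp
  rw [pow_add]
  linear_combination q ^ m * q ^ n * qint q m * hsymm

theorem sum_zetaQTerm_mul_zetaQTerm (hq0 : 0 ≤ q) (hq1 : q < 1) {k m n : ℕ} (hk : k ≠ 0)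
    (hm : m ≠ 0) (hn : n ≠ 0) :
    ∑ j ∈ range (k - 1), zetaQTerm q (k - j) (m + n) * zetaQTerm q (j + 1) m =
      zetaQTerm q k m * (qPowDivQint q n - qPowDivQint q (m + n)) -
        zetaQTerm q k (m + n) * qPowDivQint q n := by
  obtain ⟨k, rfl⟩ := Nat.exists_eq_add_one_of_ne_zero hk
  induction k with
  | zero => simp [zetaQTerm_one_mul_qPowDivQint_sub hq0 hq1 hm hn]
  | succ k ih =>
    have hshift : ∀ j ∈ range k, zetaQTerm q (k + 1 + 1 - j) (m + n) =
        zetaQTerm q (k + 1 - j) (m + n) * qPowDivQint q (m + n) := fun j hj ↦ by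
      rw [mem_range] at hj
      rw [← zetaQTerm_succ (k := k + 1 - j) (by omega), show k + 1 - j + 1 = k + 1 + 1 - j by omega]
    simp only [Nat.add_sub_cancel] at ih ⊢
    rw [sum_range_succ, sum_congr rfl fun j hj ↦ by rw [hshift j hj, mul_right_comm],
      ← sum_mul, ih k.succ_ne_zero, show k + 1 + 1 - k = 2 by omega,
      zetaQTerm_succ (k := k + 1) k.succ_ne_zero, zetaQTerm_succ (k := k + 1) k.succ_ne_zero,
      ← qPowDivQint_sub_mul_sub hq0 hq1 hm hn]
    ring

theorem zetaQTerm_le_pow_self (hq0 : 0 ≤ q) (hq1 : q < 1) {k : ℕ} (hk : 2 ≤ k) {m : ℕ}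
    (hm : m ≠ 0) : zetaQTerm q k m ≤ q ^ m :=
  (zetaQTerm_le_pow hq0 hq1 k hm).trans <|
    pow_le_pow_of_le_one hq0 hq1.le (Nat.le_mul_of_pos_left m (by omega))

theorem summable_pow_mul_pow (hq0 : 0 ≤ q) (hq1 : q < 1) :
    Summable fun p : ℕ × ℕ ↦ q ^ p.1 * q ^ p.2 :=
  (summable_geometric_of_lt_one hq0 hq1).mul_of_nonneg (summable_geometric_of_lt_one hq0 hq1)
    (pow_nonneg hq0) (pow_nonneg hq0)

theorem summable_zetaQTerm_mul (hq0 : 0 ≤ q) (hq1 : q < 1) {k : ℕ} (hk : 2 ≤ k)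
    {g : ℕ × ℕ → ℝ} (hg0 : ∀ p, 0 ≤ g p) (hg1 : ∀ p, g p ≤ 1) :
    Summable fun p : ℕ × ℕ ↦ zetaQTerm q k (p.2 + p.1 + 2) * g p := by
  refine (summable_pow_mul_pow hq0 hq1).of_nonneg_of_le
    (fun p ↦ mul_nonneg (zetaQTerm_nonneg hq0 hq1 _ (by omega)) (hg0 p)) fun p ↦ ?_
  calc zetaQTerm q k (p.2 + p.1 + 2) * g p ≤ q ^ (p.2 + p.1 + 2) * 1 :=
        mul_le_mul (zetaQTerm_le_pow_self hq0 hq1 hk (by omega)) (hg1 p) (hg0 p)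
          (pow_nonneg hq0 _)
    _ ≤ q ^ p.1 * q ^ p.2 := by
        rw [mul_one, ← pow_add]
        exact pow_le_pow_of_le_one hq0 hq1.le (by omega)

theorem summable_zetaQTerm_mul_qPowDivQint (hq0 : 0 ≤ q) (hq1 : q < 1) {k : ℕ} (hk : 2 ≤ k) :
    Summable fun p : ℕ × ℕ ↦ zetaQTerm q k (p.2 + p.1 + 2) * qPowDivQint q (p.1 + 1) :=
  summable_zetaQTerm_mul hq0 hq1 hk (fun _ ↦ qPowDivQint_nonneg hq0 hq1 (by omega))
    fun _ ↦ qPowDivQint_le_one hq0 hq1 (by omega)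

theorem summable_zetaQTerm_mul_qPowDivQint_sub (hq0 : 0 ≤ q) (hq1 : q < 1) {k : ℕ}
    (hk : 2 ≤ k) :
    Summable fun p : ℕ × ℕ ↦ zetaQTerm q k (p.2 + 1) *
      (qPowDivQint q (p.1 + 1) - qPowDivQint q (p.2 + p.1 + 2)) := by
  refine (summable_pow_mul_pow hq0 hq1).of_norm_bounded fun p ↦ ?_
  have hA : |qPowDivQint q (p.1 + 1) - qPowDivQint q (p.2 + p.1 + 2)| ≤ q ^ p.1 :=
    abs_sub_le_of_nonneg_of_le (qPowDivQint_nonneg hq0 hq1 (by omega))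
      ((qPowDivQint_le_pow hq0 hq1 (by omega)).trans (pow_le_pow_of_le_one hq0 hq1.le (by omega)))
      (qPowDivQint_nonneg hq0 hq1 (by omega))
      ((qPowDivQint_le_pow hq0 hq1 (by omega)).trans (pow_le_pow_of_le_one hq0 hq1.le (by omega)))
  have hW : zetaQTerm q k (p.2 + 1) ≤ q ^ p.2 :=
    (zetaQTerm_le_pow_self hq0 hq1 hk (by omega)).trans
      (pow_le_pow_of_le_one hq0 hq1.le (by omega))
  rw [Real.norm_eq_abs, abs_mul, abs_of_nonneg (zetaQTerm_nonneg hq0 hq1 _ (by omega)),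
    mul_comm (q ^ p.1)]
  exact mul_le_mul hW hA (abs_nonneg _) (pow_nonneg hq0 _)

theorem summable_qPowDivQint_succ (hq0 : 0 ≤ q) (hq1 : q < 1) :
    Summable fun n ↦ qPowDivQint q (n + 1) :=
  ((summable_nat_add_iff 1).mpr (summable_geometric_of_lt_one hq0 hq1)).of_nonneg_of_le
    (fun _ ↦ qPowDivQint_nonneg hq0 hq1 (by omega)) fun _ ↦ qPowDivQint_le_pow hq0 hq1 (by omega)

theorem hasSum_zetaQTerm_mul_qHarmonic (hq0 : 0 ≤ q) (hq1 : q < 1) {k : ℕ} (hk : 2 ≤ k) :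
    HasSum (fun m ↦ zetaQTerm q k (m + 1) * qHarmonic q (m + 1))
      (∑' p : ℕ × ℕ, zetaQTerm q k (p.2 + 1) *
        (qPowDivQint q (p.1 + 1) - qPowDivQint q (p.2 + p.1 + 2))) := by
  refine ((Equiv.prodComm ℕ ℕ).hasSum_iff.mpr
    (summable_zetaQTerm_mul_qPowDivQint_sub hq0 hq1 hk).hasSum).prod_fiberwise fun m ↦ ?_
  refine (((summable_qPowDivQint_succ hq0 hq1).hasSum.sub_nat_add (m + 1)).mul_left
    (zetaQTerm q k (m + 1))).congr_fun fun n ↦ ?_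
  simp only [Function.comp_apply, Equiv.prodComm_apply, Prod.swap_prod_mk]
  congr 3
  omega

theorem hasSum_zetaQTerm_mul_qHarmonic_pred (hq0 : 0 ≤ q) (hq1 : q < 1) {k : ℕ} (hk : 2 ≤ k) :
    HasSum (fun m ↦ zetaQTerm q k (m + 1) * qHarmonic q m)
      (∑' p : ℕ × ℕ, zetaQTerm q k (p.2 + p.1 + 2) * qPowDivQint q (p.1 + 1)) := by
  have h := (summable_zetaQTerm_mul_qPowDivQint hq0 hq1 hk).hasSum
  rw [← hasSum_nat_add_iff' 1]
  simp only [range_one, sum_singleton, qHarmonic, range_zero, sum_empty, mul_zero, sub_zero]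
  refine h.sum_antidiagonal.congr_fun fun N ↦ ?_
  rw [Nat.sum_antidiagonal_eq_sum_range_succ
    (fun i j ↦ zetaQTerm q k (j + i + 2) * qPowDivQint q (i + 1)), mul_sum]
  refine sum_congr rfl fun i hi ↦ ?_
  rw [mem_range] at hi
  congr 2
  omega

theorem hasSum_zetaQ_succ (hq0 : 0 ≤ q) (hq1 : q < 1) {k : ℕ} (hk : 2 ≤ k) :
    HasSum (fun p : ℕ × ℕ ↦ zetaQTerm q k (p.2 + 1) *
        (qPowDivQint q (p.1 + 1) - qPowDivQint q (p.2 + p.1 + 2)) -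
          zetaQTerm q k (p.2 + p.1 + 2) * qPowDivQint q (p.1 + 1))
      (zetaQ q (k + 1)) := by
  have hζ := (hasSum_zetaQTerm_mul_qHarmonic hq0 hq1 hk).sub
    (hasSum_zetaQTerm_mul_qHarmonic_pred hq0 hq1 hk)
  simp only [← mul_sub, qHarmonic, sum_range_succ, add_sub_cancel_left,
    ← zetaQTerm_succ (by omega : k ≠ 0)] at hζ
  rw [zetaQ_eq_tsum, hζ.tsum_eq]
  exact (summable_zetaQTerm_mul_qPowDivQint_sub hq0 hq1 hk).hasSum.sub
    (summable_zetaQTerm_mul_qPowDivQint hq0 hq1 hk).hasSum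

end

theorem stmt_7 (q : ℝ) (hq0 : 0 < q) (hq1 : q < 1) (k : ℕ) (hk : 2 ≤ k) :
    ∑ j ∈ Finset.range (k - 1), zetaQ2 q (k - j) (j + 1) = zetaQ q (k + 1) := by
  have hterms : ∀ j ∈ range (k - 1), HasSum
      (fun p : ℕ × ℕ ↦ zetaQTerm q (k - j) (p.2 + p.1 + 2) * zetaQTerm q (j + 1) (p.2 + 1))
      (zetaQ2 q (k - j) (j + 1)) := fun j hj ↦ by
    rw [zetaQ2_eq_tsum]
    exact (summable_zetaQTerm_mul hq0.le hq1 (by rw [mem_range] at hj; omega)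
      (fun _ ↦ zetaQTerm_nonneg hq0.le hq1 _ (by omega))
      fun _ ↦ zetaQTerm_le_one hq0.le hq1 _ (by omega)).hasSum
  refine (hasSum_sum hterms).unique ((hasSum_zetaQ_succ hq0.le hq1 hk).congr_fun fun p ↦ ?_)
  have h := sum_zetaQTerm_mul_zetaQTerm hq0.le hq1 (k := k) (m := p.2 + 1) (n := p.1 + 1)
    (by omega) (by omega) (by omega)
  rwa [show p.2 + 1 + (p.1 + 1) = p.2 + p.1 + 2 by omega] at h
end

section
/- As q → 1 from below, ζ_q(k) = Σ_{m≥1} q^{(k-1)m}/[m]^k tends to ζ(k) = Σ_{m≥1} 1/m^k, for every integer k ≥ 2. -/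
open scoped BigOperators

/-!
Each term of `ζ_q(k)` tends to `1/m^k` as `q → 1⁻`, since `[m] → m`. To pass to the limit under
the sum it suffices, by dominated convergence, to bound each term by `1/m^k` uniformly in
`q ∈ (0, 1)`. Pairing `q^i` with `q^(m-1-i)` (Chebyshev's sum inequality) gives
`m² q^(m-1) ≤ [m]²`, and since `k ≥ 2` the numerator `q^((k-1)m)` is at most `(q^(m-1))^(k/2)`.
-/

open Filter Finset Topology

lemma qint_eq_geom_sum {q : ℝ} (hq : q ≠ 1) (n : ℕ) : qint q n = ∑ i ∈ range n, q ^ i := by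
  rw [qint, geom_sum_eq hq, ← neg_div_neg_eq, neg_sub, neg_sub]

lemma sq_mul_pow_le_geom_sum_sq {q : ℝ} (hq₀ : 0 ≤ q) (hq₁ : q ≤ 1) (n : ℕ) :
    (n : ℝ) ^ 2 * q ^ (n - 1) ≤ (∑ i ∈ range n, q ^ i) ^ 2 := by
  have hanti : Antivary (fun i : ℕ => q ^ i) (fun i => q ^ (n - 1 - i)) :=
    (pow_right_anti₀ hq₀ hq₁).antivary fun i j hij => pow_right_anti₀ hq₀ hq₁ (by omega)
  have hcheb := (hanti.antivaryOn (range n : Set ℕ)).card_mul_sum_le_sum_mul_sum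
  have hpair : ∑ i ∈ range n, q ^ i * q ^ (n - 1 - i) = n * q ^ (n - 1) := by
    rw [sum_congr rfl fun i hi => by rw [← pow_add, Nat.add_sub_cancel' (by simp at hi; omega)],
      sum_const, card_range, nsmul_eq_mul]
  rw [hpair, sum_range_reflect (fun i => q ^ i) n, card_range] at hcheb
  linarith

lemma pow_div_geom_sum_pow_le {q : ℝ} (hq₀ : 0 ≤ q) (hq₁ : q ≤ 1) {k n : ℕ} (hk : 2 ≤ k)
    (hn : 0 < n) : q ^ ((k - 1) * n) / (∑ i ∈ range n, q ^ i) ^ k ≤ 1 / (n : ℝ) ^ k := by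
  set S := ∑ i ∈ range n, q ^ i
  have hS : 0 < S := sum_pos' (fun i _ => pow_nonneg hq₀ i) ⟨0, by simp [hn], by simp⟩
  have hkey : (n : ℝ) ^ k * q ^ ((k - 1) * n) ≤ S ^ k := by
    refine le_of_pow_le_pow_left₀ two_ne_zero (by positivity) ?_
    have hexp : (n - 1) * k ≤ 2 * ((k - 1) * n) :=
      calc (n - 1) * k ≤ k * n := by rw [mul_comm]; exact Nat.mul_le_mul_left k (Nat.sub_le n 1)
        _ ≤ 2 * (k - 1) * n := Nat.mul_le_mul_right n (by omega)
        _ = 2 * ((k - 1) * n) := mul_assoc _ _ _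
    calc ((n : ℝ) ^ k * q ^ ((k - 1) * n)) ^ 2
        = ((n : ℝ) ^ 2) ^ k * q ^ (2 * ((k - 1) * n)) := by ring
      _ ≤ ((n : ℝ) ^ 2) ^ k * q ^ ((n - 1) * k) :=
        mul_le_mul_of_nonneg_left (pow_le_pow_of_le_one hq₀ hq₁ hexp) (by positivity)
      _ = ((n : ℝ) ^ 2 * q ^ (n - 1)) ^ k := by rw [mul_pow, pow_mul]
      _ ≤ (S ^ 2) ^ k := by gcongr; exact sq_mul_pow_le_geom_sum_sq hq₀ hq₁ n
      _ = (S ^ k) ^ 2 := by ring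
  rw [div_le_div_iff₀ (by positivity) (by positivity)]
  linarith

lemma tendsto_pow_div_qint_pow (k : ℕ) {n : ℕ} (hn : 0 < n) :
    Tendsto (fun q : ℝ => q ^ ((k - 1) * n) / qint q n ^ k) (𝓝[≠] 1) (𝓝 (1 / (n : ℝ) ^ k)) := by
  have hcont : ContinuousAt (fun q : ℝ => q ^ ((k - 1) * n) / (∑ i ∈ range n, q ^ i) ^ k) 1 :=
    (continuous_pow _).continuousAt.div (by fun_prop) (by simp [hn.ne'])
  have hlim := hcont.tendsto.mono_left (nhdsWithin_le_nhds (s := {1}ᶜ))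
  simp only [one_pow, sum_const, card_range, nsmul_eq_mul, mul_one] at hlim
  refine hlim.congr' ?_
  filter_upwards [self_mem_nhdsWithin] with q hq
  rw [qint_eq_geom_sum hq]

theorem stmt_10 (k : ℕ) (hk : 2 ≤ k) :
    Filter.Tendsto (fun q : ℝ => zetaQ q k) (nhdsWithin 1 (Set.Ioo (0 : ℝ) 1))
      (nhds (∑' m : ℕ, 1 / ((m : ℝ) + 1) ^ k)) := by
  have hsum : Summable fun m : ℕ => 1 / ((m : ℝ) + 1) ^ k := by
    simpa [Nat.cast_add_one] using
      (summable_nat_add_iff 1).mpr (Real.summable_one_div_nat_pow.mpr hk)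
  have hfilter : 𝓝[Set.Ioo 0 1] (1 : ℝ) ≤ 𝓝[≠] 1 := nhdsWithin_mono 1 fun q hq => hq.2.ne
  refine tendsto_tsum_of_dominated_convergence hsum (fun m => ?_) ?_
  · exact_mod_cast (tendsto_pow_div_qint_pow k m.succ_pos).mono_left hfilter
  · filter_upwards [self_mem_nhdsWithin] with q ⟨hq₀, hq₁⟩ m
    rw [Real.norm_eq_abs, qint_eq_geom_sum hq₁.ne, abs_of_nonneg (by positivity)]
    exact_mod_cast pow_div_geom_sum_pow_le hq₀.le hq₁.le hk m.succ_pos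
end

section
/- With notation as in the definition of S and the harmonic product ∗₊: for all i, j ≥ 1, S(z_i ⋆ z_j) = S(z_i) ∗₊ S(z_j), where ⋆ is the interpolated harmonic product defined by z_i ⋆ z_j = z_i z_j + z_j z_i + (1-2t)(z_i ∘ z_j) (the term (t²-t)·z_i ∘ z_j ∘ 1 vanishing since z ∘ 1 = 0). -/
open Finsupp

/-- H¹ = R·1 + R⟨x,y⟩·y modeled as the free R-module on words z_{k₁}⋯z_{k_l},
i.e. on lists [k₁,…,k_l] of (positive) natural numbers; z_j = x^{j-1} y. -/
abbrev Hone (R : Type*) [CommRing R] := List ℕ →₀ R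

/-- The circle product on words: z_i ∘ (z_j v) = (z_{i+j} + h·z_{i+j-1}) v,
zero unless the left factor has depth 1 and the right factor is a nonempty word. -/
noncomputable def circW (R : Type*) [CommRing R] (h : R) : List ℕ → List ℕ → Hone R
  | [i], j :: v =>
      Finsupp.single ((i + j) :: v) 1 + Finsupp.single ((i + j - 1) :: v) h
  | _, _ => 0

/-- Bilinear extension of the circle product to H¹. -/
noncomputable def circ (R : Type*) [CommRing R] (h : R) (a w : Hone R) : Hone R :=
  a.sum fun u cu => w.sum fun v cv => (cu * cv) • circW R h u v

/-- S on words: S(1) = 1, S(z_k w) = z_k S(w) + t·(z_k ∘ S(w)). -/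
noncomputable def SW (R : Type*) [CommRing R] (t h : R) : List ℕ → Hone R
  | [] => Finsupp.single [] 1
  | k :: w => (SW R t h w).sum fun u c =>
      c • (Finsupp.single (k :: u) (1 : R) + t • circW R h [k] u)

/-- R-linear extension of S to H¹. -/
noncomputable def Smap (R : Type*) [CommRing R] (t h : R) (f : Hone R) : Hone R :=
  f.sum fun w c => c • SW R t h w

/-- Harmonic product ∗₊ on words. -/
noncomputable def hpW (R : Type*) [CommRing R] (h : R) : List ℕ → List ℕ → Hone R
  | [], w => Finsupp.single w 1
  | i :: u, [] => Finsupp.single (i :: u) 1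
  | i :: u, j :: v =>
      Finsupp.mapDomain (List.cons i) (hpW R h u (j :: v)) +
      Finsupp.mapDomain (List.cons j) (hpW R h (i :: u) v) +
      (Finsupp.mapDomain (List.cons (i + j)) (hpW R h u v) +
        h • Finsupp.mapDomain (List.cons (i + j - 1)) (hpW R h u v))
  termination_by u v => u.length + v.length
  decreasing_by all_goals (simp; try omega)

/-- Bilinear extension of ∗₊ to H¹. -/
noncomputable def hp (R : Type*) [CommRing R] (h : R) (f g : Hone R) : Hone R :=
  f.sum fun u cu => g.sum fun v cv => (cu * cv) • hpW R h u v


section Aux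
variable {R : Type*} [CommRing R] (t h : R)

lemma circW_pair (i j : ℕ) (v : List ℕ) :
    circW R h [i] (j :: v) =
      Finsupp.single ((i + j) :: v) 1 + Finsupp.single ((i + j - 1) :: v) h := rfl

lemma circW_nil (k : ℕ) : circW R h [k] [] = 0 := rfl

lemma SW_nil : SW R t h [] = Finsupp.single [] 1 := rfl

lemma SW_one (k : ℕ) : SW R t h [k] = Finsupp.single [k] 1 := by
  show ((Finsupp.single ([] : List ℕ) (1:R)).sum fun u c =>
      c • (Finsupp.single (k :: u) (1 : R) + t • circW R h [k] u)) = _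
  rw [Finsupp.sum_single_index]
  · simp [circW_nil]
  · simp

lemma SW_two (k l : ℕ) : SW R t h [k, l] =
    Finsupp.single [k, l] 1 + t • Finsupp.single [k + l] 1
      + (t * h) • Finsupp.single [k + l - 1] 1 := by
  show ((SW R t h [l]).sum fun u c =>
      c • (Finsupp.single (k :: u) (1 : R) + t • circW R h [k] u)) = _
  rw [SW_one, Finsupp.sum_single_index]
  · rw [circW_pair]
    simp [smul_add, Finsupp.smul_single, mul_comm]
    abel
  · simp

lemma Smap_single (w : List ℕ) (c : R) : Smap R t h (Finsupp.single w c) = c • SW R t h w := by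
  unfold Smap
  rw [Finsupp.sum_single_index]; simp

lemma Smap_add (f g : Hone R) : Smap R t h (f + g) = Smap R t h f + Smap R t h g := by
  unfold Smap
  rw [Finsupp.sum_add_index] <;> simp [add_smul]

end Aux

theorem stmt_14 (R : Type*) [CommRing R] (t h : R) (i j : ℕ) (hi : 1 ≤ i) (hj : 1 ≤ j) :
    Smap R t h
        (Finsupp.single [i, j] 1 + Finsupp.single [j, i] 1 + (1 - 2 * t) • circW R h [i] [j]) =
      hp R h (Smap R t h (Finsupp.single [i] 1)) (Smap R t h (Finsupp.single [j] 1)) := by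
  have hij : circW R h [i] [j] = Finsupp.single [i + j] 1 + Finsupp.single [i + j - 1] h := circW_pair h i j []
  rw [hij, smul_add]
  simp only [Finsupp.smul_single, smul_eq_mul, mul_one]
  rw [Smap_add, Smap_add, Smap_add]
  simp only [Smap_single, SW_one, SW_two, one_smul]
  unfold hp
  rw [Finsupp.sum_single_index (by simp), Finsupp.sum_single_index (by simp)]
  simp only [hpW]
  simp only [Finsupp.mapDomain_single, Finsupp.smul_single, smul_eq_mul, smul_add,
    Finsupp.smul_single, mul_one, one_smul, List.cons.injEq]
  rw [show j + i = i + j from Nat.add_comm j i]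
  ext a
  simp only [Finsupp.add_apply, Finsupp.single_apply]
  split_ifs <;> ring
end
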